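/- Let M be the one-level reconstruction operator: for a coarse sequence c : ℤ → ℝ and details d : ℤ → ℝ, M(c,d)_{2i} = c_i and M(c,d)_{2i+1} = d_i + ( -(1/16)c_{i-1} + (9/16)c_i + (9/16)c_{i+1} - (1/16)c_{i+2} ). Suppose bounded sequences satisfy u^{j+1} = M(u^j, d^j) and û^{j+1} = M(û^j, d̂^j) for j = 0, …, J-1, with û^0 = u^0 and sup_i |d̂^j_i - d^j_i| ≤ ε for every j. Then sup_i |û^J_i - u^J_i| ≤ 4ε·((5/4)^J − 1). -/

import Mathlib

/-!
Both the prediction and the reconstruction are linear, so the error `uh j - u j` is itself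
reconstructed from the previous error and the detail perturbation. The prediction weights have
absolute sum `1/16 + 9/16 + 9/16 + 1/16 = 5/4`, so the sup-norm error `e j` obeys
`e (j + 1) ≤ 5/4 * e j + ε` with `e 0 = 0`, whose solution is `4ε((5/4)^j − 1)`.
-/

/-- Fourth-order Deslauriers–Dubuc prediction of the odd-indexed value from a coarse sequence. -/
noncomputable def ddPredict (c : ℤ → ℝ) (i : ℤ) : ℝ :=
  -(1/16) * c (i - 1) + (9/16) * c i + (9/16) * c (i + 1) - (1/16) * c (i + 2)

/-- One-level reconstruction operator from a coarse sequence and detail coefficients. -/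
noncomputable def mrReconstruct (c d : ℤ → ℝ) : ℤ → ℝ := fun n =>
  if 2 ∣ n then c (n / 2) else d ((n - 1) / 2) + ddPredict c ((n - 1) / 2)

lemma ddPredict_sub (c c' : ℤ → ℝ) (i : ℤ) :
    ddPredict (c' - c) i = ddPredict c' i - ddPredict c i := by
  simp only [ddPredict, Pi.sub_apply]
  ring

lemma abs_ddPredict_le {c : ℤ → ℝ} {B : ℝ} (hc : ∀ i, |c i| ≤ B) (i : ℤ) :
    |ddPredict c i| ≤ 5/4 * B := by
  obtain ⟨h₀, h₀'⟩ := abs_le.mp (hc (i - 1))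
  obtain ⟨h₁, h₁'⟩ := abs_le.mp (hc i)
  obtain ⟨h₂, h₂'⟩ := abs_le.mp (hc (i + 1))
  obtain ⟨h₃, h₃'⟩ := abs_le.mp (hc (i + 2))
  rw [abs_le]
  constructor <;> · unfold ddPredict; linarith

lemma mrReconstruct_sub (c c' d d' : ℤ → ℝ) :
    mrReconstruct (c' - c) (d' - d) = mrReconstruct c' d' - mrReconstruct c d := by
  ext n
  simp only [mrReconstruct, Pi.sub_apply, ddPredict_sub]
  split_ifs <;> ring

lemma abs_mrReconstruct_le {c d : ℤ → ℝ} {B ε : ℝ} (hc : ∀ i, |c i| ≤ B)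
    (hd : ∀ i, |d i| ≤ ε) (n : ℤ) :
    |mrReconstruct c d n| ≤ 5/4 * B + ε := by
  have hB : 0 ≤ B := (abs_nonneg _).trans (hc 0)
  have hε : 0 ≤ ε := (abs_nonneg _).trans (hd 0)
  unfold mrReconstruct
  split_ifs
  · linarith [hc (n / 2)]
  · calc |d ((n - 1) / 2) + ddPredict c ((n - 1) / 2)|
        ≤ |d ((n - 1) / 2)| + |ddPredict c ((n - 1) / 2)| := abs_add_le _ _
      _ ≤ ε + 5/4 * B := add_le_add (hd _) (abs_ddPredict_le hc _)
      _ = 5/4 * B + ε := add_comm _ _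

theorem multilevel_thresholding_error_general
    (J : ℕ) (ε : ℝ)
    (u uh : ℕ → ℤ → ℝ) (d dh : ℕ → ℤ → ℝ)
    (hrec : ∀ j : ℕ, j < J → u (j + 1) = mrReconstruct (u j) (d j))
    (hrec' : ∀ j : ℕ, j < J → uh (j + 1) = mrReconstruct (uh j) (dh j))
    (h0 : uh 0 = u 0)
    (hd : ∀ j : ℕ, j < J → ∀ i : ℤ, |dh j i - d j i| ≤ ε) :
    ∀ i : ℤ, |uh J i - u J i| ≤ 4 * ε * ((5/4 : ℝ) ^ J - 1) := by
  suffices h : ∀ j ≤ J, ∀ i : ℤ, |uh j i - u j i| ≤ 4 * ε * ((5/4 : ℝ) ^ j - 1) from h J le_rfl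
  intro j
  induction j with
  | zero => simp [h0]
  | succ j ih =>
    intro hj i
    have hjJ : j < J := hj
    have herr : uh (j + 1) - u (j + 1) = mrReconstruct (uh j - u j) (dh j - d j) := by
      rw [hrec j hjJ, hrec' j hjJ, mrReconstruct_sub]
    calc |uh (j + 1) i - u (j + 1) i|
        = |mrReconstruct (uh j - u j) (dh j - d j) i| := by rw [← herr, Pi.sub_apply]
      _ ≤ 5/4 * (4 * ε * ((5/4 : ℝ) ^ j - 1)) + ε :=
          abs_mrReconstruct_le (ih hjJ.le) (hd j hjJ) i
      _ = 4 * ε * ((5/4 : ℝ) ^ (j + 1) - 1) := by ring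

/-- Multilevel stability of the reconstruction under perturbation of the detail
coefficients: if the details are perturbed by at most `ε` on each of `J` levels,
the reconstructed sequences differ by at most `4ε((5/4)^J − 1)` in sup norm. -/
theorem multilevel_thresholding_error
    (J : ℕ) (ε : ℝ) (hε : 0 ≤ ε)
    (u uh : ℕ → ℤ → ℝ) (d dh : ℕ → ℤ → ℝ)
    (hbdd_u : ∀ j : ℕ, ∃ B : ℝ, ∀ i : ℤ, |u j i| ≤ B)
    (hbdd_uh : ∀ j : ℕ, ∃ B : ℝ, ∀ i : ℤ, |uh j i| ≤ B)
    (hrec : ∀ j : ℕ, j < J → u (j + 1) = mrReconstruct (u j) (d j))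
    (hrec' : ∀ j : ℕ, j < J → uh (j + 1) = mrReconstruct (uh j) (dh j))
    (h0 : uh 0 = u 0)
    (hd : ∀ j : ℕ, j < J → ∀ i : ℤ, |dh j i - d j i| ≤ ε) :
    ∀ i : ℤ, |uh J i - u J i| ≤ 4 * ε * ((5/4 : ℝ) ^ J - 1) :=
  multilevel_thresholding_error_general J ε u uh d dh hrec hrec' h0 hd
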